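/- arXiv:0706.1159 — 2 statements merged into one kernel-verified Lean document; each statement's English description precedes it below -/
import Mathlib

section
/- For the free flow with S₀(x₀,y₀) = x₀⁵ + x₀⁶ y₀, the caustic has a point of swallowtail perestroika at the critical time t̃ = (4/7)√2 (33/7)^{3/4}: for t < t̃ the cusp equation has no real solutions with λ ≠ 0, while for t > t̃ it has two, and at t = t̃ the pre-parameterized caustic x_t(λ) satisfies x_{t̃}'(λ̃) = x_{t̃}''(λ̃) = 0 at the corresponding λ̃ ≠ 0. -/
/-!
For `λ ≠ 0` the caustic is `x_t(λ) = (4λ/5 + tλ⁴ + 36t²λ¹¹/5, 11tλ⁶/5 - 1/(30tλ⁴) - 2/(3λ))`,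
whose derivative is `P_t(λ) • (4/5, 2/(15tλ⁵))` with `P_t(λ) = 99t²λ¹⁰ + 5tλ³ + 1`; so the
generalised cusps are the nonzero roots of `P_t`. For `t > 0`, `P_t ≥ 1` on `λ ≥ 0`, while on
`λ ≤ 0` it decreases down to the critical point `c_t`, the root of `66tλ⁷ = -1`, and increases
afterwards, so `P_t` has no, one double, or two simple roots according to the sign of its minimum
`1 + (7/2) t c_t³`. As `(t c_t³)⁷ = -t⁴/66³`, this minimum is strictly decreasing in `t` and
vanishes exactly when `t⁴ = 66³ (2/7)⁷ = t̃⁴`. At `t̃` the point `c_t̃` is a double root of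
`P_t̃`, hence also a zero of `x_t̃''`.
-/

/-- The free flow map for `S₀(x₀,y₀) = x₀⁵ + x₀⁶ y₀`:
`Φ_t(x₀,y₀) = (x₀ + t(5x₀⁴ + 6x₀⁵y₀), y₀ + t x₀⁶)`. -/
noncomputable def swFlow (t : ℝ) (p : ℝ × ℝ) : ℝ × ℝ :=
  (p.1 + t * (5 * p.1 ^ 4 + 6 * p.1 ^ 5 * p.2), p.2 + t * p.1 ^ 6)

/-- The pre-caustic `{det DΦ_t = 0}` solved for `y₀`:
`y₀ = (36 t² x₀¹⁰ − 1 − 20 t x₀³)/(30 t x₀⁴)`. -/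
noncomputable def swPreCaustic (t lam : ℝ) : ℝ :=
  (36 * t ^ 2 * lam ^ 10 - 1 - 20 * t * lam ^ 3) / (30 * t * lam ^ 4)

/-- The pre-parameterisation `x_t(λ)` of the caustic. -/
noncomputable def swCaustic (t : ℝ) (lam : ℝ) : ℝ × ℝ :=
  swFlow t (lam, swPreCaustic t lam)

open Set Filter Topology

noncomputable def cuspPoly (t l : ℝ) : ℝ := 99 * t ^ 2 * l ^ 10 + 5 * t * l ^ 3 + 1

theorem swCaustic_eq {t : ℝ} (ht : t ≠ 0) :
    swCaustic t = fun l ↦ (4 / 5 * l + t * l ^ 4 + 36 / 5 * t ^ 2 * l ^ 11,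
      11 / 5 * t * l ^ 6 - 1 / (30 * t * l ^ 4) - 2 / (3 * l)) := by
  funext l
  rcases eq_or_ne l 0 with rfl | hl
  · simp [swCaustic, swFlow, swPreCaustic]
  · simp only [swCaustic, swFlow, swPreCaustic, Prod.mk.injEq]
    constructor <;> field_simp <;> ring

theorem hasDerivAt_swCaustic {t l : ℝ} (ht : t ≠ 0) (hl : l ≠ 0) :
    HasDerivAt (swCaustic t) (cuspPoly t l • ((4 / 5 : ℝ), 2 / (15 * t * l ^ 5))) l := by
  rw [swCaustic_eq ht]
  have h₁ : HasDerivAt (fun l ↦ 4 / 5 * l + t * l ^ 4 + 36 / 5 * t ^ 2 * l ^ 11)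
      (4 / 5 * cuspPoly t l) l := by
    refine ((((hasDerivAt_id' l).const_mul (4 / 5)).add ((hasDerivAt_pow 4 l).const_mul t)).add
      ((hasDerivAt_pow 11 l).const_mul (36 / 5 * t ^ 2))).congr_deriv ?_
    simp only [cuspPoly]; norm_num; ring
  have h₂ : HasDerivAt (fun l ↦ 11 / 5 * t * l ^ 6 - 1 / (30 * t * l ^ 4) - 2 / (3 * l))
      (2 / (15 * t * l ^ 5) * cuspPoly t l) l := by
    refine ((((hasDerivAt_pow 6 l).const_mul (11 / 5 * t)).sub
      ((hasDerivAt_const l (1 : ℝ)).div ((hasDerivAt_pow 4 l).const_mul (30 * t))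
        (by positivity))).sub
      ((hasDerivAt_const l (2 : ℝ)).div ((hasDerivAt_id' l).const_mul 3)
        (by positivity))).congr_deriv ?_
    simp only [cuspPoly]; norm_num; field_simp; ring
  simpa [mul_comm] using h₁.prodMk h₂

theorem deriv_swCaustic_eq_zero_iff {t l : ℝ} (ht : t ≠ 0) (hl : l ≠ 0) :
    deriv (swCaustic t) l = 0 ↔ cuspPoly t l = 0 := by
  rw [(hasDerivAt_swCaustic ht hl).deriv, smul_eq_zero]
  simp

theorem hasDerivAt_cuspPoly (t l : ℝ) :
    HasDerivAt (cuspPoly t) (15 * t * l ^ 2 * (66 * t * l ^ 7 + 1)) l := by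
  refine ((((hasDerivAt_pow 10 l).const_mul (99 * t ^ 2)).add
    ((hasDerivAt_pow 3 l).const_mul (5 * t))).add_const 1).congr_deriv ?_
  norm_num; ring

theorem continuous_cuspPoly (t : ℝ) : Continuous (cuspPoly t) := by
  unfold cuspPoly; fun_prop

theorem one_le_cuspPoly {t l : ℝ} (ht : 0 ≤ t) (hl : 0 ≤ l) : 1 ≤ cuspPoly t l := by
  have : 0 ≤ 99 * t ^ 2 * l ^ 10 := by positivity
  have : 0 ≤ 5 * t * l ^ 3 := by positivity
  unfold cuspPoly; linarith

noncomputable def cuspCrit (t : ℝ) : ℝ := -(66 * t)⁻¹ ^ (7⁻¹ : ℝ)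

section cuspCrit

variable {t : ℝ}

theorem cuspCrit_neg (ht : 0 < t) : cuspCrit t < 0 := by
  have : 0 < (66 * t)⁻¹ ^ (7⁻¹ : ℝ) := by positivity
  unfold cuspCrit; linarith

theorem cuspCrit_pow_seven (ht : 0 < t) : 66 * t * cuspCrit t ^ 7 = -1 := by
  have h := Real.rpow_inv_natCast_pow (inv_nonneg.2 (by positivity : (0 : ℝ) ≤ 66 * t))
    (n := 7) (by norm_num)
  rw [cuspCrit, neg_pow, ← Nat.cast_ofNat (R := ℝ) (n := 7), h]
  field_simp

theorem strictAntiOn_cuspPoly_Iic (ht : 0 < t) :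
    StrictAntiOn (cuspPoly t) (Iic (cuspCrit t)) := by
  refine strictAntiOn_of_deriv_neg (convex_Iic _) (continuous_cuspPoly t).continuousOn
    fun l hl ↦ ?_
  rw [interior_Iic] at hl
  have hl0 : l ≠ 0 := (hl.trans (cuspCrit_neg ht)).ne
  have h7 : 66 * t * l ^ 7 < -1 := by
    rw [← cuspCrit_pow_seven ht]
    exact mul_lt_mul_of_pos_left (Odd.pow_lt_pow (by decide) |>.2 hl) (by positivity)
  rw [(hasDerivAt_cuspPoly t l).deriv]
  exact mul_neg_of_pos_of_neg (by positivity) (by linarith)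

theorem strictMonoOn_cuspPoly_Icc (ht : 0 < t) :
    StrictMonoOn (cuspPoly t) (Icc (cuspCrit t) 0) := by
  refine strictMonoOn_of_deriv_pos (convex_Icc _ _) (continuous_cuspPoly t).continuousOn
    fun l hl ↦ ?_
  rw [interior_Icc] at hl
  have h7 : -1 < 66 * t * l ^ 7 := by
    rw [← cuspCrit_pow_seven ht]
    exact mul_lt_mul_of_pos_left (Odd.pow_lt_pow (by decide) |>.2 hl.1) (by positivity)
  have hl0 : l ≠ 0 := hl.2.ne
  rw [(hasDerivAt_cuspPoly t l).deriv]
  exact mul_pos (by positivity) (by linarith)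

theorem hasDerivAt_cuspPoly_cuspCrit (ht : 0 < t) : HasDerivAt (cuspPoly t) 0 (cuspCrit t) := by
  simpa [cuspCrit_pow_seven ht] using hasDerivAt_cuspPoly t (cuspCrit t)

theorem cuspPoly_cuspCrit (ht : 0 < t) :
    cuspPoly t (cuspCrit t) = 1 + 7 / 2 * (t * cuspCrit t ^ 3) := by
  unfold cuspPoly
  linear_combination 3 / 2 * t * cuspCrit t ^ 3 * cuspCrit_pow_seven ht

theorem mul_cuspCrit_pow_three_neg (ht : 0 < t) : t * cuspCrit t ^ 3 < 0 :=
  mul_neg_of_pos_of_neg ht (Odd.pow_neg (by decide) (cuspCrit_neg ht))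

theorem cuspPoly_cuspCrit_le (ht : 0 < t) (l : ℝ) : cuspPoly t (cuspCrit t) ≤ cuspPoly t l := by
  have hc := cuspCrit_neg ht
  rcases le_total l (cuspCrit t) with hlc | hcl
  · exact (strictAntiOn_cuspPoly_Iic ht).antitoneOn hlc self_mem_Iic hlc
  rcases le_total l 0 with hl | hl
  · exact (strictMonoOn_cuspPoly_Icc ht).monotoneOn ⟨le_rfl, hc.le⟩ ⟨hcl, hl⟩ hcl
  · linarith [cuspPoly_cuspCrit ht, one_le_cuspPoly ht.le hl, mul_cuspCrit_pow_three_neg ht]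

theorem cuspPoly_two_mul_cuspCrit_pos (ht : 0 < t) : 0 < cuspPoly t (2 * cuspCrit t) := by
  have : cuspPoly t (2 * cuspCrit t) = 1 - 1496 * (t * cuspCrit t ^ 3) := by
    unfold cuspPoly
    linear_combination 1536 * t * cuspCrit t ^ 3 * cuspCrit_pow_seven ht
  linarith [mul_cuspCrit_pow_three_neg ht]

theorem mul_cuspCrit_pow_three_pow_seven (ht : 0 < t) :
    (t * cuspCrit t ^ 3) ^ 7 = -t ^ 4 / 287496 := by
  field_simp
  linear_combination ((66 * t * cuspCrit t ^ 7) ^ 2 - 66 * t * cuspCrit t ^ 7 + 1) *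
    cuspCrit_pow_seven ht

theorem exists_cuspPoly_eq_zero_iff (ht : 0 < t) (hneg : cuspPoly t (cuspCrit t) < 0) :
    ∃ l₁ l₂, l₁ < cuspCrit t ∧ cuspCrit t < l₂ ∧ l₂ < 0 ∧
      ∀ l, cuspPoly t l = 0 ↔ l = l₁ ∨ l = l₂ := by
  have hc := cuspCrit_neg ht
  have h0 : cuspPoly t 0 = 1 := by simp [cuspPoly]
  obtain ⟨l₁, hl₁, h₁⟩ := intermediate_value_Icc' (by linarith : 2 * cuspCrit t ≤ cuspCrit t)
    (continuous_cuspPoly t).continuousOn ⟨hneg.le, (cuspPoly_two_mul_cuspCrit_pos ht).le⟩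
  obtain ⟨l₂, hl₂, h₂⟩ := intermediate_value_Icc hc.le
    (continuous_cuspPoly t).continuousOn ⟨hneg.le, h0 ▸ zero_le_one⟩
  refine ⟨l₁, l₂, hl₁.2.lt_of_ne ?_, hl₂.1.lt_of_ne ?_, hl₂.2.lt_of_ne ?_,
    fun l ↦ ⟨fun hl ↦ ?_, ?_⟩⟩
  · rintro rfl; linarith
  · rintro rfl; linarith
  · rintro rfl; linarith
  · have hl0 : l ≤ 0 := not_lt.1 fun h ↦ by linarith [one_le_cuspPoly ht.le h.le]
    rcases le_total l (cuspCrit t) with hlc | hcl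
    · exact .inl <| (strictAntiOn_cuspPoly_Iic ht).injOn hlc hl₁.2 (hl.trans h₁.symm)
    · exact .inr <| (strictMonoOn_cuspPoly_Icc ht).injOn ⟨hcl, hl0⟩ hl₂ (hl.trans h₂.symm)
  · rintro (rfl | rfl) <;> assumption

theorem strictAntiOn_cuspPoly_cuspCrit :
    StrictAntiOn (fun t ↦ cuspPoly t (cuspCrit t)) (Ioi 0) := by
  intro a ha b hb hab
  simp only [cuspPoly_cuspCrit ha, cuspPoly_cuspCrit hb]
  suffices (b * cuspCrit b ^ 3) ^ 7 < (a * cuspCrit a ^ 3) ^ 7 by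
    linarith [(Odd.pow_lt_pow (by decide)).1 this]
  rw [mul_cuspCrit_pow_three_pow_seven ha, mul_cuspCrit_pow_three_pow_seven hb]
  have := pow_lt_pow_left₀ hab ha.le (by norm_num : 4 ≠ 0)
  linarith

end cuspCrit

noncomputable def critTime : ℝ := (4 / 7) * Real.sqrt 2 * ((33 / 7 : ℝ) ^ ((3 : ℝ) / 4))

theorem critTime_pos : 0 < critTime := by unfold critTime; positivity

theorem critTime_pow_four : critTime ^ 4 = 36799488 / 823543 := by
  have h2 : Real.sqrt 2 ^ 4 = 4 := by
    rw [show 4 = 2 * 2 by rfl, pow_mul, Real.sq_sqrt zero_le_two]; norm_num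
  have h33 : ((33 / 7 : ℝ) ^ ((3 : ℝ) / 4)) ^ 4 = (33 / 7) ^ 3 := by
    rw [← Real.rpow_natCast, ← Real.rpow_mul (by norm_num)]; norm_num
  rw [critTime, mul_pow, mul_pow, h2, h33]; norm_num

theorem cuspPoly_cuspCrit_critTime : cuspPoly critTime (cuspCrit critTime) = 0 := by
  have : critTime * cuspCrit critTime ^ 3 = -2 / 7 := (Odd.pow_inj (n := 7) (by decide)).1 <| by
    rw [mul_cuspCrit_pow_three_pow_seven critTime_pos, critTime_pow_four]; norm_num
  rw [cuspPoly_cuspCrit critTime_pos, this]; norm_num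

theorem HasDerivAt.smul_of_double_root {𝕜 F : Type*} [NontriviallyNormedField 𝕜]
    [NormedAddCommGroup F] [NormedSpace 𝕜 F] {f : 𝕜 → 𝕜} {v : 𝕜 → F} {x : 𝕜}
    (hf : HasDerivAt f 0 x) (hfx : f x = 0) (hv : DifferentiableAt 𝕜 v x) :
    HasDerivAt (fun y ↦ f y • v y) 0 x := by
  have h := hf.smul hv.hasDerivAt
  rw [hfx, zero_smul, zero_smul, add_zero] at h
  exact h

theorem deriv_deriv_swCaustic_of_double_root {t l : ℝ} (ht : t ≠ 0) (hl : l ≠ 0)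
    (hf : HasDerivAt (cuspPoly t) 0 l) (hfl : cuspPoly t l = 0) :
    deriv (deriv (swCaustic t)) l = 0 := by
  have hev : deriv (swCaustic t) =ᶠ[𝓝 l]
      fun y ↦ cuspPoly t y • ((4 / 5 : ℝ), 2 / (15 * t * y ^ 5)) := by
    filter_upwards [eventually_ne_nhds hl] with y hy using (hasDerivAt_swCaustic ht hy).deriv
  rw [hev.deriv_eq]
  exact (hf.smul_of_double_root hfl (by fun_prop (disch := positivity))).deriv

/-- for the free flow with `S₀(x₀,y₀) = x₀⁵ + x₀⁶ y₀`, the caustic has a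
point of swallowtail perestroika at the critical time `t̃ = (4/7)√2 (33/7)^{3/4}`:
for `0 < t < t̃` there are no generalised cusps with `λ ≠ 0`, for `t > t̃` there are
exactly two, and at `t = t̃` there is `λ̃ ≠ 0` with `x_{t̃}'(λ̃) = x_{t̃}''(λ̃) = 0`. -/
theorem swallowtail_perestroika_critical_time :
    ∀ ttilde : ℝ, ttilde = (4 / 7) * Real.sqrt 2 * ((33 / 7 : ℝ) ^ ((3 : ℝ) / 4)) →
    ((∀ t : ℝ, 0 < t → t < ttilde →
        ∀ lam : ℝ, lam ≠ 0 → deriv (swCaustic t) lam ≠ 0) ∧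
     (∀ t : ℝ, ttilde < t →
        ∃ lam₁ lam₂ : ℝ, lam₁ ≠ lam₂ ∧ lam₁ ≠ 0 ∧ lam₂ ≠ 0 ∧
          deriv (swCaustic t) lam₁ = 0 ∧ deriv (swCaustic t) lam₂ = 0 ∧
          ∀ lam : ℝ, lam ≠ 0 → deriv (swCaustic t) lam = 0 →
            lam = lam₁ ∨ lam = lam₂) ∧
     (∃ lamtilde : ℝ, lamtilde ≠ 0 ∧
        deriv (swCaustic ttilde) lamtilde = 0 ∧
        deriv (deriv (swCaustic ttilde)) lamtilde = 0)) := by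
  intro ttilde htilde
  obtain rfl : ttilde = critTime := htilde
  refine ⟨fun t ht htc lam hlam hd ↦ ?_, fun t htc ↦ ?_, ?_⟩
  · have hmin : 0 < cuspPoly t (cuspCrit t) :=
      cuspPoly_cuspCrit_critTime ▸ strictAntiOn_cuspPoly_cuspCrit ht critTime_pos htc
    have hroot := (deriv_swCaustic_eq_zero_iff ht.ne' hlam).1 hd
    linarith [cuspPoly_cuspCrit_le ht lam]
  · have ht := critTime_pos.trans htc
    have hmin : cuspPoly t (cuspCrit t) < 0 :=
      cuspPoly_cuspCrit_critTime ▸ strictAntiOn_cuspPoly_cuspCrit critTime_pos ht htc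
    obtain ⟨l₁, l₂, h₁, h₂, hl₂, hroots⟩ := exists_cuspPoly_eq_zero_iff ht hmin
    have hl₁ : l₁ ≠ 0 := (h₁.trans (cuspCrit_neg ht)).ne
    refine ⟨l₁, l₂, (h₁.trans h₂).ne, hl₁, hl₂.ne, ?_, ?_, fun lam hlam hd ↦ ?_⟩
    · exact (deriv_swCaustic_eq_zero_iff ht.ne' hl₁).2 ((hroots l₁).2 (.inl rfl))
    · exact (deriv_swCaustic_eq_zero_iff ht.ne' hl₂.ne).2 ((hroots l₂).2 (.inr rfl))
    · exact (hroots lam).1 ((deriv_swCaustic_eq_zero_iff ht.ne' hlam).1 hd)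
  · have hc := (cuspCrit_neg critTime_pos).ne
    exact ⟨cuspCrit critTime, hc,
      (deriv_swCaustic_eq_zero_iff critTime_pos.ne' hc).2 cuspPoly_cuspCrit_critTime,
      deriv_deriv_swCaustic_of_double_root critTime_pos.ne' hc
        (hasDerivAt_cuspPoly_cuspCrit critTime_pos) cuspPoly_cuspCrit_critTime⟩
end

section
/- For the d-dimensional stochastic Burgers equation with V = 0 and noise potential k(x)·Ẇ = x·Ẇ(t), the minimizer of the stochastic action with endpoints X(0) = x₀, X(t) = x gives A(x₀,x,t) = |x−x₀|²/(2t) + (ε/t)(x−x₀)·∫₀ᵗW(s)ds − ε x·W(t) − (ε²/2)∫₀ᵗ|W(s)|²ds + (ε²/(2t))|∫₀ᵗW(s)ds|². -/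
/-!
Along `Ẋ = p₀ − ε W` the kinetic term and the integrated-by-parts noise term combine pointwise:
`½‖p₀ − εW‖² + ε⟪p₀ − εW, W⟫ = ½‖p₀‖² − (ε²/2)‖W‖²`, so all cross terms between `p₀` and `W` cancel
and the action is `(t/2)‖p₀‖² − ε⟪x, W t⟫ − (ε²/2)∫₀ᵗ‖W‖²`. Since `t p₀ = x − x₀ + ε∫₀ᵗ W`,
expanding `(t/2)‖p₀‖² = ‖x − x₀ + ε∫₀ᵗ W‖²/(2t)` gives the remaining three terms.
-/

section

variable {E : Type*} [NormedAddCommGroup E] [InnerProductSpace ℝ E]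

theorem half_norm_sub_smul_sq_add_inner (p w : E) (ε : ℝ) :
    (1/2) * ‖p - ε • w‖^2 + ε * (inner ℝ (p - ε • w) w : ℝ)
      = (1/2) * ‖p‖^2 - (ε^2/2) * ‖w‖^2 := by
  rw [norm_sub_sq_real, inner_sub_left, real_inner_smul_right, real_inner_smul_left,
    real_inner_self_eq_norm_sq, norm_smul, mul_pow, Real.norm_eq_abs, sq_abs]
  ring

theorem integral_half_norm_sub_smul_sq_add_inner {W : ℝ → E} (hW : Continuous W)
    (p : E) (ε a b : ℝ) :
    (1/2) * (∫ s in a..b, ‖p - ε • W s‖^2) + ε * ∫ s in a..b, (inner ℝ (p - ε • W s) (W s) : ℝ)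
      = (b - a) / 2 * ‖p‖^2 - (ε^2/2) * ∫ s in a..b, ‖W s‖^2 := by
  have hkinetic : Continuous fun s => (1/2) * ‖p - ε • W s‖^2 := by fun_prop
  have hnoise : Continuous fun s => ε * (inner ℝ (p - ε • W s) (W s) : ℝ) := by fun_prop
  rw [← intervalIntegral.integral_const_mul, ← intervalIntegral.integral_const_mul,
    ← intervalIntegral.integral_add (hkinetic.intervalIntegrable a b) (hnoise.intervalIntegrable a b)]
  simp only [half_norm_sub_smul_sq_add_inner]
  have hpotential : Continuous fun s => (ε^2/2) * ‖W s‖^2 := by fun_prop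
  rw [intervalIntegral.integral_sub intervalIntegrable_const (hpotential.intervalIntegrable a b),
    intervalIntegral.integral_const, intervalIntegral.integral_const_mul, smul_eq_mul]
  ring

theorem mul_norm_inv_smul_add_smul_sq {t : ℝ} (ht : t ≠ 0) (u v : E) (ε : ℝ) :
    t / 2 * ‖t⁻¹ • (u + ε • v)‖^2
      = ‖u‖^2 / (2*t) + (ε/t) * (inner ℝ u v : ℝ) + (ε^2/(2*t)) * ‖v‖^2 := by
  rw [norm_smul, mul_pow, norm_add_sq_real, real_inner_smul_right, norm_smul, mul_pow,
    norm_inv, inv_pow, Real.norm_eq_abs, Real.norm_eq_abs, sq_abs, sq_abs]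
  field_simp

end

theorem stochastic_action_formula_general (d : ℕ)
    (W : ℝ → EuclideanSpace ℝ (Fin d)) (hW : Continuous W)
    (ε t : ℝ) (ht : 0 < t)
    (x₀ x : EuclideanSpace ℝ (Fin d))
    (p₀ : EuclideanSpace ℝ (Fin d))
    (hp₀ : p₀ = t⁻¹ • (x - x₀ + ε • ∫ u in (0:ℝ)..t, W u))
    (Xdot : ℝ → EuclideanSpace ℝ (Fin d))
    (hXdot : ∀ s, Xdot s = p₀ - ε • W s) :
    (1/2) * (∫ s in (0:ℝ)..t, ‖Xdot s‖^2)
      - ε * ((inner ℝ x (W t) : ℝ) - ∫ s in (0:ℝ)..t, (inner ℝ (Xdot s) (W s) : ℝ))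
    = ‖x - x₀‖^2 / (2*t)
      + (ε/t) * (inner ℝ (x - x₀) (∫ s in (0:ℝ)..t, W s) : ℝ)
      - ε * (inner ℝ x (W t) : ℝ)
      - (ε^2/2) * (∫ s in (0:ℝ)..t, ‖W s‖^2)
      + (ε^2/(2*t)) * ‖∫ s in (0:ℝ)..t, W s‖^2 := by
  obtain rfl : Xdot = fun s => p₀ - ε • W s := funext hXdot
  have haction := integral_half_norm_sub_smul_sq_add_inner hW p₀ ε 0 t
  have hp₀_sq := mul_norm_inv_smul_add_smul_sq ht.ne' (x - x₀) (∫ s in (0:ℝ)..t, W s) ε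
  rw [sub_zero] at haction
  rw [← hp₀] at hp₀_sq
  beta_reduce
  linear_combination haction + hp₀_sq

/-- for the `d`-dimensional stochastic Burgers equation with `V = 0` and
noise potential `k(x)·Ẇ = x·Ẇ(t)`, the minimising path between `X(0) = x₀` and
`X(t) = x` is `X(s) = x₀ + s p₀ − ε ∫₀ˢ W(u) du` with `p₀` chosen so that `X(t) = x`,
and its action (with the stochastic integral `∫₀ᵗ X·dW` written via integration by parts
as `x·W(t) − ∫₀ᵗ Ẋ(s)·W(s) ds`, using `W(0) = 0`) equals
`|x−x₀|²/(2t) + (ε/t)(x−x₀)·∫₀ᵗ W − ε x·W(t) − (ε²/2)∫₀ᵗ|W|² + (ε²/(2t))|∫₀ᵗ W|²`. -/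
theorem stochastic_action_formula (d : ℕ)
    (W : ℝ → EuclideanSpace ℝ (Fin d)) (hW : Continuous W)
    (hW0 : W 0 = 0)
    (ε t : ℝ) (ht : 0 < t)
    (x₀ x : EuclideanSpace ℝ (Fin d))
    (p₀ : EuclideanSpace ℝ (Fin d))
    (hp₀ : p₀ = t⁻¹ • (x - x₀ + ε • ∫ u in (0:ℝ)..t, W u))
    (X Xdot : ℝ → EuclideanSpace ℝ (Fin d))
    (hX : ∀ s, X s = x₀ + s • p₀ - ε • ∫ u in (0:ℝ)..s, W u)
    (hXdot : ∀ s, Xdot s = p₀ - ε • W s) :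
    (1/2) * (∫ s in (0:ℝ)..t, ‖Xdot s‖^2)
      - ε * ((inner ℝ x (W t) : ℝ) - ∫ s in (0:ℝ)..t, (inner ℝ (Xdot s) (W s) : ℝ))
    = ‖x - x₀‖^2 / (2*t)
      + (ε/t) * (inner ℝ (x - x₀) (∫ s in (0:ℝ)..t, W s) : ℝ)
      - ε * (inner ℝ x (W t) : ℝ)
      - (ε^2/2) * (∫ s in (0:ℝ)..t, ‖W s‖^2)
      + (ε^2/(2*t)) * ‖∫ s in (0:ℝ)..t, W s‖^2 :=
  stochastic_action_formula_general d W hW ε t ht x₀ x p₀ hp₀ Xdot hXdot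
end
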